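/- arXiv:1904.10556 — 3 statements merged into one kernel-verified Lean document; each statement's English description precedes it below -/
import Mathlib

section
/- Let 0 < α < 1, k > 0 and q₀ ∈ ℝ, and define q(t) = q₀ · E_α(-k·t^α) for t ≥ 0. Then q is differentiable on (0,∞) and for every t > 0 it satisfies the fractional first-order (relaxation) equation ᶜD^α q(t) = -k·q(t), i.e. (1/Γ(1-α)) · ∫_0^t q'(τ)·(t-τ)^{-α} dτ = -k·q₀·E_α(-k·t^α), with q(0) = q₀. -/
/-- The two-parameter Mittag-Leffler function `E_{a,b}(z) = ∑_{k=0}^∞ z^k / Γ(a·k + b)`. -/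
noncomputable def mittagLeffler (a b : ℝ) (z : ℝ) : ℝ :=
  ∑' k : ℕ, z ^ k / Real.Gamma (a * k + b)

/-!
Since `Γ(αn + 1) ≥ ⌊αn⌋!`, the series of `E_α` converges on all of `ℝ`, so
`q(t) = q₀ ∑ (-k)ⁿ t^(αn) / Γ(αn + 1)` can be differentiated termwise. Against the kernel
`(t - τ)^(-α)`, each differentiated term is a Beta integral:
`∫₀ᵗ τ^(αn - 1) (t - τ)^(-α) dτ = Γ(αn) Γ(1 - α) / Γ(αn + 1 - α) · t^(αn - α)`,
so the `n`-th term of the Caputo derivative is `Γ(1 - α)` times the `(n - 1)`-st term of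
`-k E_α(-k t^α)`. Sum and integral may be interchanged because the same computation with `|k|`
in place of `-k` yields a convergent series.
-/

open Real Filter Topology MeasureTheory Set
open scoped Nat

theorem integral_rpow_mul_sub_rpow {a b t : ℝ} (ha : 0 < a) (hb : 0 < b) (ht : 0 < t) :
    ∫ τ in 0..t, τ ^ (a - 1) * (t - τ) ^ (b - 1)
      = Gamma a * Gamma b / Gamma (a + b) * t ^ (a + b - 1) := by
  apply Complex.ofReal_injective
  rw [← intervalIntegral.integral_ofReal]
  have hcongr : ∫ τ in 0..t, ((τ ^ (a - 1) * (t - τ) ^ (b - 1) : ℝ) : ℂ)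
      = ∫ τ in 0..t, (τ : ℂ) ^ ((a : ℂ) - 1) * ((t : ℂ) - τ) ^ ((b : ℂ) - 1) := by
    refine intervalIntegral.integral_congr fun τ hτ => ?_
    rw [uIcc_of_le ht.le] at hτ
    rw [Complex.ofReal_mul, Complex.ofReal_cpow hτ.1, Complex.ofReal_cpow (sub_nonneg.2 hτ.2)]
    push_cast
    rfl
  rw [hcongr, Complex.betaIntegral_scaled _ _ ht,
    Complex.betaIntegral_eq_Gamma_mul_div _ _ (by simpa) (by simpa),
    Complex.ofReal_mul, Complex.ofReal_cpow ht.le]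
  push_cast [← Complex.Gamma_ofReal]
  ring_nf

theorem intervalIntegrable_rpow_mul_sub_rpow {a b t : ℝ} (ha : 0 < a) (hb : 0 < b)
    (ht : 0 < t) :
    IntervalIntegrable (fun τ => τ ^ (a - 1) * (t - τ) ^ (b - 1)) volume 0 t := by
  by_contra h
  have hpos : 0 < Gamma a * Gamma b / Gamma (a + b) * t ^ (a + b - 1) := by
    have := Gamma_pos_of_pos ha
    have := Gamma_pos_of_pos hb
    have := Gamma_pos_of_pos (add_pos ha hb)
    positivity
  rw [← integral_rpow_mul_sub_rpow ha hb ht, intervalIntegral.integral_undef h] at hpos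
  exact hpos.false

section MittagLeffler

variable {α : ℝ}

theorem tendsto_pow_div_Gamma_mul_add_one (hα : 0 < α) (r : ℝ) :
    Tendsto (fun n : ℕ => r ^ n / Gamma (α * n + 1)) atTop (𝓝 0) := by
  set y := max 1 (|r| ^ α⁻¹)
  have hy : 1 ≤ y := le_max_left _ _
  have hαn : Tendsto (fun n : ℕ => α * n) atTop atTop :=
    tendsto_natCast_atTop_atTop.const_mul_atTop hα
  have hlim : Tendsto (fun n : ℕ => y * (y ^ ⌊α * n⌋₊ / (⌊α * n⌋₊ ! : ℝ))) atTop (𝓝 0) := by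
    simpa using ((Real.summable_pow_div_factorial y).tendsto_atTop_zero.comp
      (tendsto_nat_floor_atTop.comp hαn)).const_mul y
  refine squeeze_zero_norm' ?_ hlim
  filter_upwards [hαn.eventually_ge_atTop 1] with n hn
  set m := ⌊α * n⌋₊
  have hm : (1 : ℝ) ≤ m := by exact_mod_cast Nat.le_floor (by exact_mod_cast hn)
  have hlt : α * n < m + 1 := Nat.lt_floor_add_one _
  have hΓ : (m ! : ℝ) ≤ Gamma (α * n + 1) := by
    rw [← Gamma_nat_eq_factorial]
    exact Gamma_strictMonoOn_Ici.monotoneOn (mem_Ici.2 (by linarith)) (mem_Ici.2 (by linarith))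
      (by linarith [Nat.floor_le (by positivity : 0 ≤ α * n)])
  have hpow : |r| ^ n ≤ y ^ (m + 1) := by
    calc |r| ^ n = (|r| ^ α⁻¹) ^ (α * n) := by
          rw [← rpow_mul (abs_nonneg r), inv_mul_cancel_left₀ hα.ne', rpow_natCast]
      _ ≤ y ^ (α * n) := rpow_le_rpow (by positivity) (le_max_right _ _) (by positivity)
      _ ≤ y ^ ((m : ℝ) + 1) := rpow_le_rpow_of_exponent_le hy hlt.le
      _ = y ^ (m + 1) := by norm_cast
  rw [norm_div, norm_pow, Real.norm_eq_abs,
    Real.norm_of_nonneg (Gamma_pos_of_pos (by positivity)).le]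
  calc |r| ^ n / Gamma (α * n + 1) ≤ y ^ (m + 1) / m ! :=
        div_le_div₀ (by positivity) hpow (by positivity) hΓ
    _ = y * (y ^ m / m !) := by ring

theorem summable_pow_div_Gamma_mul_add_one (hα : 0 < α) (r : ℝ) :
    Summable (fun n : ℕ => r ^ n / Gamma (α * n + 1)) := by
  refine summable_geometric_two.of_norm_bounded_eventually_nat ?_
  filter_upwards [(tendsto_pow_div_Gamma_mul_add_one hα (2 * r)).norm.eventually_le_const
    (by norm_num : ‖(0 : ℝ)‖ < 1)] with n hn
  calc ‖r ^ n / Gamma (α * n + 1)‖ = (1 / 2) ^ n * ‖(2 * r) ^ n / Gamma (α * n + 1)‖ := by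
        rw [mul_pow, mul_div_assoc, norm_mul, norm_pow, ← mul_assoc, ← mul_pow]; norm_num
    _ ≤ (1 / 2) ^ n := mul_le_of_le_one_right (by positivity) hn

theorem mittagLeffler_zero (β : ℝ) : mittagLeffler α β 0 = 1 / Gamma β := by
  rw [mittagLeffler, tsum_eq_single 0 fun n hn => by rw [zero_pow hn, zero_div]]
  simp

theorem hasDerivAt_mittagLeffler (hα : 0 < α) (z : ℝ) :
    HasDerivAt (mittagLeffler α 1)
      (∑' n : ℕ, (n + 1) * z ^ n / Gamma (α * (n + 1) + 1)) z := by
  set R := |z| + 1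
  have hsummable_shift (r : ℝ) :
      Summable (fun n : ℕ => r ^ (n + 1) / Gamma (α * ((n : ℝ) + 1) + 1)) := by
    simpa using (summable_nat_add_iff 1).mpr (summable_pow_div_Gamma_mul_add_one hα r)
  have hshift : mittagLeffler α 1 =
      fun y => 1 + ∑' n : ℕ, y ^ (n + 1) / Gamma (α * ((n : ℝ) + 1) + 1) := by
    funext y
    rw [mittagLeffler, (summable_pow_div_Gamma_mul_add_one hα y).tsum_eq_zero_add]
    simp
  have hbound (n : ℕ) (y : ℝ) (hy : y ∈ Metric.ball 0 R) :
      ‖(n + 1) * y ^ n / Gamma (α * ((n : ℝ) + 1) + 1)‖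
        ≤ (2 * R) ^ (n + 1) / Gamma (α * ((n : ℝ) + 1) + 1) := by
    have hyR : |y| ≤ R := by
      rw [Metric.mem_ball, dist_zero_right, Real.norm_eq_abs] at hy
      exact hy.le
    have hR : 1 ≤ R := le_add_of_nonneg_left (abs_nonneg z)
    have hΓ : 0 < Gamma (α * ((n : ℝ) + 1) + 1) := Gamma_pos_of_pos (by positivity)
    rw [norm_div, Real.norm_of_nonneg hΓ.le, norm_mul, norm_pow, Real.norm_eq_abs]
    gcongr
    calc |(n : ℝ) + 1| * |y| ^ n ≤ 2 ^ (n + 1) * R ^ (n + 1) := by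
          gcongr
          · rw [abs_of_nonneg (by positivity)]
            exact_mod_cast (Nat.lt_two_pow_self (n := n + 1)).le
          · exact (pow_le_pow_left₀ (abs_nonneg y) hyR n).trans (pow_le_pow_right₀ hR n.le_succ)
      _ = (2 * R) ^ (n + 1) := (mul_pow 2 R (n + 1)).symm
  have hterm (n : ℕ) (y : ℝ) (_ : y ∈ Metric.ball 0 R) :
      HasDerivAt (fun y => y ^ (n + 1) / Gamma (α * ((n : ℝ) + 1) + 1))
        ((n + 1) * y ^ n / Gamma (α * ((n : ℝ) + 1) + 1)) y := by
    simpa using (hasDerivAt_pow (n + 1) y).div_const (Gamma (α * ((n : ℝ) + 1) + 1))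
  have hz : z ∈ Metric.ball 0 R := by simp [R]
  have := (hasDerivAt_tsum_of_isPreconnected (hsummable_shift (2 * R)) Metric.isOpen_ball
    (convex_ball 0 R).isPreconnected hterm hbound hz (hsummable_shift z) hz).const_add 1
  rwa [hshift]

theorem hasDerivAt_mittagLeffler_mul_rpow (hα : 0 < α) (x : ℝ) {t : ℝ} (ht : 0 < t) :
    HasDerivAt (fun s => mittagLeffler α 1 (x * s ^ α))
      (∑' n : ℕ, x ^ (n + 1) * t ^ (α * (n + 1) - 1) / Gamma (α * (n + 1))) t := by
  refine ((hasDerivAt_mittagLeffler hα (x * t ^ α)).comp t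
    ((hasDerivAt_rpow_const (p := α) (Or.inl ht.ne')).const_mul x)).congr_deriv ?_
  rw [← tsum_mul_right]
  refine tsum_congr fun n => ?_
  have hp : α * ((n : ℝ) + 1) ≠ 0 := by positivity
  have hpow : t ^ (α * ((n : ℝ) + 1) - 1) = (t ^ α) ^ n * t ^ (α - 1) := by
    rw [← rpow_natCast, ← rpow_mul ht.le, ← rpow_add ht]
    ring_nf
  rw [Gamma_add_one hp, hpow, mul_pow, pow_succ]
  field_simp

theorem integral_tsum_mul_sub_rpow_eq_mittagLeffler (hα : 0 < α) (hα1 : α < 1) (x : ℝ) {t : ℝ}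
    (ht : 0 < t) :
    ∫ τ in 0..t,
        (∑' n : ℕ, x ^ (n + 1) * τ ^ (α * (n + 1) - 1) / Gamma (α * (n + 1))) * (t - τ) ^ (-α)
      = Gamma (1 - α) * (x * mittagLeffler α 1 (x * t ^ α)) := by
  set g : ℕ → ℝ → ℝ := fun n τ => τ ^ (α * ((n : ℝ) + 1) - 1) * (t - τ) ^ (-α)
  have hb : 0 < 1 - α := sub_pos.2 hα1
  have hg_int (n : ℕ) : IntegrableOn (g n) (Ioc 0 t) := by
    have := intervalIntegrable_rpow_mul_sub_rpow (by positivity : 0 < α * ((n : ℝ) + 1)) hb ht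
    rw [sub_sub_cancel_left] at this
    exact (intervalIntegrable_iff_integrableOn_Ioc_of_le ht.le).mp this
  have hg_nonneg (n : ℕ) : ∀ τ ∈ Ioc 0 t, 0 ≤ g n τ := fun τ hτ =>
    mul_nonneg (rpow_nonneg hτ.1.le _) (rpow_nonneg (sub_nonneg.2 hτ.2) _)
  have hg_integral (n : ℕ) : ∫ τ in Ioc 0 t, g n τ
      = Gamma (α * (n + 1)) * Gamma (1 - α) / Gamma (α * n + 1) * (t ^ α) ^ n := by
    rw [← intervalIntegral.integral_of_le ht.le]
    have := integral_rpow_mul_sub_rpow (by positivity : 0 < α * ((n : ℝ) + 1)) hb ht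
    rw [sub_sub_cancel_left] at this
    rw [this, ← rpow_natCast, ← rpow_mul ht.le]
    ring_nf
  have hterm (y : ℝ) (n : ℕ) :
      y ^ (n + 1) / Gamma (α * (n + 1)) * ∫ τ in Ioc 0 t, g n τ
        = Gamma (1 - α) * y * ((y * t ^ α) ^ n / Gamma (α * n + 1)) := by
    have : Gamma (α * (n + 1)) ≠ 0 := (Gamma_pos_of_pos (by positivity)).ne'
    rw [hg_integral, mul_pow, pow_succ]
    field_simp
  have hsummable_norm : Summable fun n : ℕ =>
      ∫ τ in Ioc 0 t, ‖x ^ (n + 1) / Gamma (α * (n + 1)) * g n τ‖ := by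
    refine ((summable_pow_div_Gamma_mul_add_one hα (|x| * t ^ α)).mul_left
      (Gamma (1 - α) * |x|)).congr fun n => ?_
    rw [← hterm]
    simp_rw [norm_mul, integral_const_mul, norm_div, norm_pow, Real.norm_eq_abs,
      abs_of_pos (Gamma_pos_of_pos (by positivity : 0 < α * ((n : ℝ) + 1)))]
    congr 1
    exact setIntegral_congr_fun measurableSet_Ioc fun τ hτ =>
      (abs_of_nonneg (hg_nonneg n τ hτ)).symm
  rw [intervalIntegral.integral_of_le ht.le]
  calc ∫ τ in Ioc 0 t, (∑' n : ℕ, x ^ (n + 1) * τ ^ (α * (n + 1) - 1) / Gamma (α * (n + 1)))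
          * (t - τ) ^ (-α)
      = ∫ τ in Ioc 0 t, ∑' n : ℕ, x ^ (n + 1) / Gamma (α * (n + 1)) * g n τ := by
        congr 1 with τ
        rw [← tsum_mul_right]
        exact tsum_congr fun n => by ring
    _ = ∑' n : ℕ, x ^ (n + 1) / Gamma (α * (n + 1)) * ∫ τ in Ioc 0 t, g n τ := by
        rw [← integral_tsum_of_summable_integral_norm (fun n => (hg_int n).const_mul _)
          hsummable_norm]
        simp_rw [integral_const_mul]
    _ = Gamma (1 - α) * (x * mittagLeffler α 1 (x * t ^ α)) := by
        simp_rw [hterm, mittagLeffler, ← tsum_mul_left, mul_assoc]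

end MittagLeffler

theorem mittagLeffler_solves_fractional_relaxation_general (α k q₀ : ℝ)
    (hα : 0 < α) (hα1 : α < 1) (q : ℝ → ℝ)
    (hq : q = fun t : ℝ => q₀ * mittagLeffler α 1 (-(k * t ^ α))) :
    (∀ t : ℝ, 0 < t → DifferentiableAt ℝ q t) ∧
    (∀ t : ℝ, 0 < t →
      (1 / Real.Gamma (1 - α)) * ∫ τ in (0:ℝ)..t, deriv q τ * (t - τ) ^ (-α)
        = -k * (q₀ * mittagLeffler α 1 (-(k * t ^ α)))) ∧
    q 0 = q₀ := by
  simp only [← neg_mul] at hq ⊢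
  have hderiv (t : ℝ) (ht : 0 < t) : HasDerivAt q
      (q₀ * ∑' n : ℕ, (-k) ^ (n + 1) * t ^ (α * (n + 1) - 1) / Gamma (α * (n + 1))) t :=
    hq ▸ (hasDerivAt_mittagLeffler_mul_rpow hα (-k) ht).const_mul q₀
  refine ⟨fun t ht => (hderiv t ht).differentiableAt, fun t ht => ?_, ?_⟩
  · have hcaputo : ∫ τ in 0..t, deriv q τ * (t - τ) ^ (-α)
        = q₀ * (Gamma (1 - α) * (-k * mittagLeffler α 1 (-k * t ^ α))) := by
      rw [← integral_tsum_mul_sub_rpow_eq_mittagLeffler hα hα1 (-k) ht,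
        ← intervalIntegral.integral_const_mul]
      refine intervalIntegral.integral_congr_ae (ae_of_all _ fun τ hτ => ?_)
      rw [uIoc_of_le ht.le] at hτ
      rw [(hderiv τ hτ.1).deriv, mul_assoc]
    have : Gamma (1 - α) ≠ 0 := (Gamma_pos_of_pos (sub_pos.2 hα1)).ne'
    rw [hcaputo]
    field_simp
  · simp [hq, zero_rpow hα.ne', mittagLeffler_zero]

/-- Let 0 < α < 1, k > 0 and q₀ ∈ ℝ, and define
`q(t) = q₀ · E_α(-k·t^α)`. Then q is differentiable on (0,∞), satisfies
the fractional relaxation equation `ᶜD^α q(t) = -k·q(t)` for every t > 0,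
and `q(0) = q₀`. -/
theorem mittagLeffler_solves_fractional_relaxation (α k q₀ : ℝ)
    (hα : 0 < α) (hα1 : α < 1) (hk : 0 < k) (q : ℝ → ℝ)
    (hq : q = fun t : ℝ => q₀ * mittagLeffler α 1 (-(k * t ^ α))) :
    (∀ t : ℝ, 0 < t → DifferentiableAt ℝ q t) ∧
    (∀ t : ℝ, 0 < t →
      (1 / Real.Gamma (1 - α)) * ∫ τ in (0:ℝ)..t, deriv q τ * (t - τ) ^ (-α)
        = -k * (q₀ * mittagLeffler α 1 (-(k * t ^ α)))) ∧
    q 0 = q₀ :=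
  mittagLeffler_solves_fractional_relaxation_general α k q₀ hα hα1 q hq
end

section
/- For every t ≥ 0, the one-parameter Mittag-Leffler function of order 1/2 satisfies E_{1/2}(-√t) = e^t · (1 + erf(-√t)) = e^t · (1 - (2/√π) · ∫_0^{√t} e^{-u²} du). Equivalently, the solution of the Caputo initial value problem ᶜD^{1/2} q = -q, q(0)=1, has the closed form q(t) = e^t·erfc(√t). -/
/-!
On the real line `E(z) = E_{1/2}(z) = ∑ z^k / Γ(k/2 + 1)` is an entire power series, and the
functional equation `Γ(x + 1) = x Γ(x)` turns into the coefficient recurrence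
`(k + 2) / Γ((k+2)/2 + 1) = 2 / Γ(k/2 + 1)`, i.e. the linear ODE `E'(z) = 2/√π + 2 z E(z)`.
Hence `(E(z) e^{-z²})' = (2/√π) e^{-z²}`, and integrating from `0` (where `E(0) = 1`) gives
`E(z) e^{-z²} = 1 + erf z`. Evaluating at `z = -√t` and using that `erf` is odd yields the claim.
-/

open Real Nat

section PowerSeries

variable {a : ℕ → ℝ}

theorem summable_mul_pow_of_summable_abs_mul_pow
    (ha : ∀ r, 0 ≤ r → Summable fun k => |a k| * r ^ k) (x : ℝ) :
    Summable fun k => a k * x ^ k :=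
  .of_norm_bounded (ha |x| (abs_nonneg x)) fun k => by
    rw [Real.norm_eq_abs, abs_mul, abs_pow]

theorem hasDerivAt_tsum_mul_pow (ha : ∀ r, 0 ≤ r → Summable fun k => |a k| * r ^ k) (x : ℝ) :
    HasDerivAt (fun z => ∑' k, a k * z ^ k) (∑' k, (k + 1) * a (k + 1) * x ^ k) x := by
  set R := |x| + 1
  have hR : 1 ≤ R := le_add_of_nonneg_left (abs_nonneg x)
  have hbound : ∀ k (y : ℝ), |y| < R → ‖a k * (k * y ^ (k - 1))‖ ≤ |a k| * (2 * R) ^ k := by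
    intro k y hy
    rw [Real.norm_eq_abs, abs_mul, abs_mul, Nat.abs_cast, abs_pow, mul_pow]
    gcongr
    · exact_mod_cast Nat.lt_two_pow_self.le
    · calc |y| ^ (k - 1) ≤ R ^ (k - 1) := by gcongr
        _ ≤ R ^ k := pow_le_pow_right₀ hR (Nat.sub_le k 1)
  have hu := ha (2 * R) (by positivity)
  have hmem : ∀ y : ℝ, |y| < R → y ∈ Metric.ball (0 : ℝ) R := by simp
  have hderiv := hasDerivAt_tsum_of_isPreconnected hu Metric.isOpen_ball
    (convex_ball (0 : ℝ) R).isPreconnected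
    (fun k y _ => (hasDerivAt_pow k y).const_mul (a k))
    (fun k y hy => hbound k y (by simpa using hy)) (hmem 0 (by rw [abs_zero]; linarith))
    (summable_mul_pow_of_summable_abs_mul_pow ha 0) (hmem x (by simp [R]))
  have hsum : Summable fun k => a k * (k * x ^ (k - 1)) :=
    .of_norm_bounded hu fun k => hbound k x (by simp [R])
  rw [hsum.tsum_eq_zero_add] at hderiv
  refine hderiv.congr_deriv ?_
  simp only [CharP.cast_eq_zero, zero_mul, mul_zero, zero_add, Nat.cast_add, Nat.cast_one,
    Nat.add_sub_cancel]
  exact tsum_congr fun k => by ring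

end PowerSeries

theorem Real.factorial_le_two_mul_Gamma_nat_add_three_halves (m : ℕ) :
    (m ! : ℝ) ≤ 2 * Gamma (m + 3 / 2) := by
  cases m with
  | zero =>
    have hπ : 1 ≤ √π := by rw [one_le_sqrt]; linarith [pi_gt_three]
    rw [show ((0 : ℕ) : ℝ) + 3 / 2 = 1 / 2 + 1 by norm_num, Gamma_add_one (by norm_num),
      Gamma_one_half_eq]
    simp only [factorial_zero, cast_one]
    linarith
  | succ m =>
    have hm : (2 : ℝ) ≤ m + 1 + 1 := by linarith [m.cast_nonneg (α := ℝ)]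
    have hmono : Gamma (m + 1 + 1) ≤ Gamma (m + 1 + 3 / 2) :=
      Gamma_strictMonoOn_Ici.monotoneOn hm (by simp only [Set.mem_Ici]; linarith) (by linarith)
    rw [← Gamma_nat_eq_factorial]
    push_cast
    linarith [Gamma_pos_of_pos (show (0 : ℝ) < m + 1 + 3 / 2 by positivity)]

theorem summable_abs_inv_Gamma_half_mul_pow {r : ℝ} (hr : 0 ≤ r) :
    Summable fun k : ℕ => |(Gamma (1 / 2 * k + 1))⁻¹| * r ^ k := by
  have hGamma (k : ℕ) : 0 < Gamma (1 / 2 * k + 1) := Gamma_pos_of_pos (by positivity)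
  simp only [abs_of_pos (inv_pos.mpr (hGamma _))]
  apply Summable.even_add_odd
  · convert Real.summable_pow_div_factorial (r ^ 2) using 2 with m
    rw [show 1 / 2 * ((2 * m : ℕ) : ℝ) + 1 = m + 1 by push_cast; ring, Gamma_nat_eq_factorial,
      pow_mul]
    ring
  · refine .of_nonneg_of_le (fun _ => by positivity) (fun m => ?_)
      ((Real.summable_pow_div_factorial (r ^ 2)).mul_left (2 * r))
    rw [show 1 / 2 * ((2 * m + 1 : ℕ) : ℝ) + 1 = m + 3 / 2 by push_cast; ring, pow_succ, pow_mul]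
    have hfac := factorial_le_two_mul_Gamma_nat_add_three_halves m
    calc (Gamma (m + 3 / 2))⁻¹ * ((r ^ 2) ^ m * r) = r * (r ^ 2) ^ m / Gamma (m + 3 / 2) := by ring
      _ ≤ r * (r ^ 2) ^ m / (m ! / 2) := by gcongr; linarith
      _ = 2 * r * ((r ^ 2) ^ m / m !) := by ring

theorem Gamma_half_mul_nat_add_two_recurrence (k : ℕ) :
    ((k : ℝ) + 2) * (Gamma (1 / 2 * (k + 2 : ℕ) + 1))⁻¹ = 2 * (Gamma (1 / 2 * k + 1))⁻¹ := by
  have hk : (1 / 2 * (k : ℝ) + 1) ≠ 0 := by positivity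
  rw [show 1 / 2 * ((k + 2 : ℕ) : ℝ) + 1 = (1 / 2 * k + 1) + 1 by push_cast; ring,
    Gamma_add_one hk]
  field_simp

theorem mittagLeffler_half_eq_tsum (z : ℝ) :
    mittagLeffler (1 / 2) 1 z = ∑' k : ℕ, (Gamma (1 / 2 * k + 1))⁻¹ * z ^ k := by
  simp only [mittagLeffler, div_eq_inv_mul]

theorem hasDerivAt_mittagLeffler_half (z : ℝ) :
    HasDerivAt (mittagLeffler (1 / 2) 1) (2 / √π + 2 * z * mittagLeffler (1 / 2) 1 z) z := by
  have hderiv := hasDerivAt_tsum_mul_pow (fun r hr => summable_abs_inv_Gamma_half_mul_pow hr) z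
  rw [← funext mittagLeffler_half_eq_tsum] at hderiv
  refine hderiv.congr_deriv ?_
  have hshift (k : ℕ) : (((k + 1 : ℕ) : ℝ) + 1) * (Gamma (1 / 2 * ((k + 1 + 1 : ℕ) : ℝ) + 1))⁻¹
      * z ^ (k + 1) = 2 * z * ((Gamma (1 / 2 * k + 1))⁻¹ * z ^ k) := by
    have hrec := Gamma_half_mul_nat_add_two_recurrence k
    rw [show ((k + 1 + 1 : ℕ) : ℝ) = ((k + 2 : ℕ) : ℝ) by rfl]
    push_cast at hrec ⊢
    linear_combination z ^ (k + 1) * hrec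
  have hsummable := summable_mul_pow_of_summable_abs_mul_pow
    (fun r hr => summable_abs_inv_Gamma_half_mul_pow hr) z
  rw [tsum_eq_zero_add' (by simpa only [hshift] using hsummable.mul_left (2 * z)),
    tsum_congr hshift, tsum_mul_left, ← mittagLeffler_half_eq_tsum]
  have hGamma : Gamma (1 / 2 * ((0 + 1 : ℕ) : ℝ) + 1) = √π / 2 := by
    rw [show 1 / 2 * ((0 + 1 : ℕ) : ℝ) + 1 = 1 / 2 + 1 by norm_num, Gamma_add_one (by norm_num),
      Gamma_one_half_eq]
    ring
  rw [hGamma]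
  simp

theorem mittagLeffler_half_zero : mittagLeffler (1 / 2) 1 0 = 1 := by
  rw [mittagLeffler_half_eq_tsum, tsum_eq_single 0 fun k hk => by simp [zero_pow hk]]
  simp

theorem mittagLeffler_half_mul_exp_neg_sq (z : ℝ) :
    mittagLeffler (1 / 2) 1 z * exp (-z ^ 2) = 1 + 2 / √π * ∫ u in (0 : ℝ)..z, exp (-u ^ 2) := by
  have hderiv (u : ℝ) : HasDerivAt (fun u => mittagLeffler (1 / 2) 1 u * exp (-u ^ 2))
      (2 / √π * exp (-u ^ 2)) u := by
    have hsq : HasDerivAt (fun u : ℝ => -u ^ 2) (-(2 * u)) u := by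
      simpa using (hasDerivAt_pow 2 u).fun_neg
    exact ((hasDerivAt_mittagLeffler_half u).mul hsq.exp).congr_deriv (by ring)
  have hftc := intervalIntegral.integral_eq_sub_of_hasDerivAt (fun u _ => hderiv u)
    ((by fun_prop : Continuous fun u => 2 / √π * exp (-u ^ 2)).intervalIntegrable 0 z)
  rw [intervalIntegral.integral_const_mul] at hftc
  simp only [mittagLeffler_half_zero, ne_eq, OfNat.ofNat_ne_zero, not_false_eq_true, zero_pow,
    neg_zero, exp_zero, mul_one] at hftc
  linarith

/-- For every t ≥ 0, the one-parameter Mittag-Leffler function of order 1/2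
satisfies `E_{1/2}(-√t) = e^t · (1 + erf(-√t)) = e^t · (1 - (2/√π)·∫_0^{√t} e^{-u²} du)`;
i.e. the solution of `ᶜD^{1/2} q = -q`, `q(0)=1`, is `q(t) = e^t · erfc(√t)`. -/
theorem mittagLeffler_half_eq_exp_erfc (t : ℝ) (ht : 0 ≤ t) :
    mittagLeffler (1/2) 1 (-Real.sqrt t)
      = Real.exp t *
          (1 - (2 / Real.sqrt Real.pi) * ∫ u in (0:ℝ)..Real.sqrt t, Real.exp (-u ^ 2)) := by
  have hodd : ∫ u in (0 : ℝ)..-√t, exp (-u ^ 2) = -∫ u in (0 : ℝ)..√t, exp (-u ^ 2) := by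
    have hcomp := intervalIntegral.integral_comp_neg (a := 0) (b := √t) fun u => exp (-u ^ 2)
    rw [neg_zero, intervalIntegral.integral_symm 0 (-√t)] at hcomp
    simp only [neg_sq] at hcomp
    linarith
  have hml := mittagLeffler_half_mul_exp_neg_sq (-√t)
  rw [neg_sq, sq_sqrt ht, hodd] at hml
  calc mittagLeffler (1 / 2) 1 (-√t) = mittagLeffler (1 / 2) 1 (-√t) * exp (-t) * exp t := by
        rw [mul_assoc, ← exp_add, neg_add_cancel, exp_zero, mul_one]
    _ = _ := by rw [hml]; ring
end

section
/- Let 0 < μ ≤ 1, ν > 0 and k ≥ 0, and let s > 0 be a real number with s^μ > k. Then the Laplace transform of t ↦ t^{ν-1}·E_{μ,ν}(-k·t^μ) exists and satisfies ∫_0^∞ e^{-s·t} · t^{ν-1} · E_{μ,ν}(-k·t^μ) dt = s^{μ-ν} / (s^μ + k). -/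
/-!
Expand `t^(ν-1) E_{μ,ν}(-k t^μ) = ∑ₙ (-k)^n t^(μn+ν-1) / Γ(μn+ν)`. By the Gamma integral the
`n`-th term has Laplace transform `(-k)^n / s^(μn+ν)`. Because `0 ≤ k < s^μ`, the transforms of
the absolute values of the terms form the convergent geometric series `s^(-ν) ∑ₙ (k/s^μ)^n`, so
the series converges in `L¹(0, ∞)` and may be integrated term by term; the alternating geometric
series sums to `s^(-ν) / (1 + k/s^μ) = s^(μ-ν) / (s^μ + k)`.
-/

open MeasureTheory

open Set Real

theorem MeasureTheory.integrable_tsum_of_summable_integral_norm {α E ι : Type*}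
    [MeasurableSpace α] {μ : Measure α} [NormedAddCommGroup E] [CompleteSpace E] [Countable ι]
    {F : ι → α → E} (hF_int : ∀ i, Integrable (F i) μ)
    (hF_sum : Summable fun i ↦ ∫ a, ‖F i a‖ ∂μ) :
    Integrable (fun a ↦ ∑' i, F i a) μ := by
  set f : ι → α →₁[μ] E := fun i ↦ (hF_int i).toL1 (F i)
  have hf_ae : ∀ᵐ a ∂μ, ∀ i, f i a = F i a := ae_all_iff.2 fun i ↦ (hF_int i).coeFn_toL1
  have hf_norm (i : ι) : ‖f i‖ = ∫ a, ‖F i a‖ ∂μ := by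
    rw [L1.norm_eq_integral_norm]
    exact integral_congr_ae <| by filter_upwards [(hF_int i).coeFn_toL1] with a ha; rw [ha]
  have hf_sum : ∑' i, ‖f i‖ₑ ≠ ⊤ :=
    tsum_enorm_ne_top_iff_summable_norm.2 (by simpa only [hf_norm] using hF_sum)
  refine (L1.integrable_coeFn (∑' i, f i)).congr ?_
  filter_upwards [Lp.coeFn_tsum hf_sum, hf_ae] with a h_tsum h_coe
  simp only [h_tsum, h_coe]

theorem integral_exp_neg_mul_mul_rpow {a s : ℝ} (ha : 0 < a) (hs : 0 < s) :
    ∫ t in Ioi 0, exp (-(s * t)) * t ^ (a - 1) = Gamma a / s ^ a := by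
  simp_rw [mul_comm (exp _)]
  rw [integral_rpow_mul_exp_neg_mul_Ioi ha hs, div_rpow zero_le_one hs.le, one_rpow]
  ring

theorem integrableOn_exp_neg_mul_mul_rpow {a s : ℝ} (ha : 0 < a) (hs : 0 < s) :
    IntegrableOn (fun t ↦ exp (-(s * t)) * t ^ (a - 1)) (Ioi 0) :=
  Integrable.of_integral_ne_zero <| by
    rw [integral_exp_neg_mul_mul_rpow ha hs]
    exact (div_pos (Gamma_pos_of_pos ha) (by positivity)).ne'

theorem integrableOn_and_hasSum_laplace_rpow_series {ι : Type*} [Countable ι] {c a : ι → ℝ}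
    {s : ℝ} (hs : 0 < s) (ha : ∀ i, 0 < a i)
    (hsum : Summable fun i ↦ |c i| * Gamma (a i) / s ^ a i) :
    IntegrableOn (fun t ↦ exp (-(s * t)) * ∑' i, c i * t ^ (a i - 1)) (Ioi 0) ∧
      HasSum (fun i ↦ c i * Gamma (a i) / s ^ a i)
        (∫ t in Ioi 0, exp (-(s * t)) * ∑' i, c i * t ^ (a i - 1)) := by
  set F : ι → ℝ → ℝ := fun i t ↦ c i * (exp (-(s * t)) * t ^ (a i - 1))
  have hF_tsum :
      (fun t ↦ exp (-(s * t)) * ∑' i, c i * t ^ (a i - 1)) = fun t ↦ ∑' i, F i t := by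
    ext t
    rw [← tsum_mul_left]
    exact tsum_congr fun i ↦ by ring
  have hF_int (i : ι) : IntegrableOn (F i) (Ioi 0) :=
    (integrableOn_exp_neg_mul_mul_rpow (ha i) hs).const_mul (c i)
  have hF_integral (i : ι) : ∫ t in Ioi 0, F i t = c i * Gamma (a i) / s ^ a i := by
    rw [integral_const_mul, integral_exp_neg_mul_mul_rpow (ha i) hs, mul_div_assoc]
  have hF_norm (i : ι) : ∫ t in Ioi 0, ‖F i t‖ = |c i| * Gamma (a i) / s ^ a i := by
    have h_abs : EqOn (fun t ↦ ‖F i t‖) (fun t ↦ |c i| * (exp (-(s * t)) * t ^ (a i - 1)))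
        (Ioi 0) := fun t (ht : 0 < t) ↦ by
      simp only [F, norm_mul, norm_eq_abs, abs_exp, abs_rpow_of_nonneg ht.le, abs_of_pos ht]
    rw [setIntegral_congr_fun measurableSet_Ioi h_abs, integral_const_mul,
      integral_exp_neg_mul_mul_rpow (ha i) hs, mul_div_assoc]
  rw [hF_tsum]
  refine ⟨integrable_tsum_of_summable_integral_norm hF_int ?_, ?_⟩
  · simpa only [hF_norm] using hsum
  · simpa only [hF_integral] using hasSum_integral_of_summable_integral_norm hF_int
      (by simpa only [hF_norm] using hsum)

theorem rpow_mul_mittagLeffler (μ ν k : ℝ) {t : ℝ} (ht : 0 < t) :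
    t ^ (ν - 1) * mittagLeffler μ ν (-(k * t ^ μ)) =
      ∑' n : ℕ, (-k) ^ n / Gamma (μ * n + ν) * t ^ (μ * n + ν - 1) := by
  rw [mittagLeffler, ← tsum_mul_left]
  refine tsum_congr fun n ↦ ?_
  rw [neg_mul_eq_neg_mul, mul_pow, ← rpow_natCast (t ^ μ), ← rpow_mul ht.le,
    add_sub_assoc, rpow_add ht]
  ring

theorem rpow_mul_natCast_add {s : ℝ} (hs : 0 < s) (μ ν : ℝ) (n : ℕ) :
    s ^ (μ * n + ν) = (s ^ μ) ^ n * s ^ ν := by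
  rw [rpow_add hs, rpow_mul hs.le, rpow_natCast]

theorem laplace_mittagLeffler_general (μ ν k s : ℝ) (hμ : 0 < μ)
    (hν : 0 < ν) (hk : 0 ≤ k) (hs : 0 < s) (hsk : k < s ^ μ) :
    IntegrableOn
      (fun t : ℝ => Real.exp (-(s * t)) * t ^ (ν - 1) * mittagLeffler μ ν (-(k * t ^ μ)))
      (Set.Ioi 0) ∧
    ∫ t in Set.Ioi (0:ℝ),
        Real.exp (-(s * t)) * t ^ (ν - 1) * mittagLeffler μ ν (-(k * t ^ μ))
      = s ^ (μ - ν) / (s ^ μ + k) := by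
  have hsμ : 0 < s ^ μ := rpow_pos_of_pos hs μ
  have hΓ (n : ℕ) : 0 < Gamma (μ * n + ν) := Gamma_pos_of_pos (by positivity)
  have hterm (x : ℝ) (n : ℕ) :
      x ^ n / Gamma (μ * n + ν) * Gamma (μ * n + ν) / s ^ (μ * n + ν) =
        (s ^ ν)⁻¹ * (x / s ^ μ) ^ n := by
    rw [div_mul_cancel₀ _ (hΓ n).ne', rpow_mul_natCast_add hs, div_pow]
    field_simp
  have hq : k / s ^ μ < 1 := (div_lt_one hsμ).2 hsk
  have hsum : Summable fun n : ℕ ↦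
      |(-k) ^ n / Gamma (μ * n + ν)| * Gamma (μ * n + ν) / s ^ (μ * n + ν) := by
    refine ((summable_geometric_of_lt_one (by positivity) hq).mul_left (s ^ ν)⁻¹).congr
      fun n ↦ ?_
    rw [abs_div, abs_of_pos (hΓ n), abs_pow, abs_neg, abs_of_nonneg hk, hterm]
  obtain ⟨h_int, h_sum⟩ :=
    integrableOn_and_hasSum_laplace_rpow_series hs (fun n : ℕ ↦ by positivity) hsum
  have h_series : EqOn
      (fun t ↦ exp (-(s * t)) * t ^ (ν - 1) * mittagLeffler μ ν (-(k * t ^ μ)))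
      (fun t ↦ exp (-(s * t)) * ∑' n : ℕ, (-k) ^ n / Gamma (μ * n + ν) * t ^ (μ * n + ν - 1))
      (Ioi 0) := fun t ht ↦ by
    dsimp only
    rw [mul_assoc, rpow_mul_mittagLeffler μ ν k ht]
  refine ⟨h_int.congr_fun h_series.symm measurableSet_Ioi, ?_⟩
  have hq' : ‖-k / s ^ μ‖ < 1 := by rwa [neg_div, norm_neg, norm_of_nonneg (by positivity)]
  rw [setIntegral_congr_fun measurableSet_Ioi h_series, ← h_sum.tsum_eq,
    tsum_congr (hterm (-k)), tsum_mul_left, tsum_geometric_of_norm_lt_one hq', neg_div,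
    sub_neg_eq_add, rpow_sub hs]
  field_simp

/-- Let 0 < μ ≤ 1, ν > 0 and k ≥ 0, and let s > 0 with s^μ > k. Then the
Laplace transform of `t ↦ t^{ν-1}·E_{μ,ν}(-k·t^μ)` exists and equals `s^{μ-ν}/(s^μ + k)`. -/
theorem laplace_mittagLeffler (μ ν k s : ℝ) (hμ : 0 < μ) (hμ1 : μ ≤ 1)
    (hν : 0 < ν) (hk : 0 ≤ k) (hs : 0 < s) (hsk : k < s ^ μ) :
    IntegrableOn
      (fun t : ℝ => Real.exp (-(s * t)) * t ^ (ν - 1) * mittagLeffler μ ν (-(k * t ^ μ)))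
      (Set.Ioi 0) ∧
    ∫ t in Set.Ioi (0:ℝ),
        Real.exp (-(s * t)) * t ^ (ν - 1) * mittagLeffler μ ν (-(k * t ^ μ))
      = s ^ (μ - ν) / (s ^ μ + k) :=
  laplace_mittagLeffler_general μ ν k s hμ hν hk hs hsk
end
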